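/- Let R be a finite non-duplicating TRS over a finite signature F and A a strongly linear interpretation for F. Then s →_R t implies [s] + WG(A,R) ≥ [t]. -/

import Mathlib

/-- First-order terms over a signature `F` (with arity function `ar`) and variables `V`. -/
inductive Tm (F : Type) (ar : F → ℕ) (V : Type) : Type where
  | var : V → Tm F ar V
  | fn : (f : F) → (Fin (ar f) → Tm F ar V) → Tm F ar V

namespace Tm

variable {F : Type} {ar : F → ℕ} {V : Type}

/-- Number of occurrences of the variable `x` in a term. -/
def count [DecidableEq V] (x : V) : Tm F ar V → ℕ
  | var y => if y = x then 1 else 0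
  | fn _ ts => ∑ i, (ts i).count x

/-- Application of a substitution to a term. -/
def subst (σ : V → Tm F ar V) : Tm F ar V → Tm F ar V
  | var x => σ x
  | fn f ts => fn f fun i => (ts i).subst σ

/-- Evaluation of a term in the strongly linear interpretation determined by the
constants `c : F → ℕ` (each `f` is interpreted as `x₁ + ⋯ + xₙ + c f`), under the
assignment `α` for the variables. -/
def evalSLI (c : F → ℕ) (α : V → ℕ) : Tm F ar V → ℕ
  | var x => α x
  | fn f ts => (∑ i, evalSLI c α (ts i)) + c f

end Tm

/-- `R` is a term rewrite system: left-hand sides are not variables and every variable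
of a right-hand side occurs in the corresponding left-hand side. -/
def IsTRS {F : Type} {ar : F → ℕ} (R : Set (Tm F ar ℕ × Tm F ar ℕ)) : Prop :=
  ∀ p ∈ R, (∀ x : ℕ, p.1 ≠ Tm.var x) ∧
    ∀ x : ℕ, 0 < Tm.count x p.2 → 0 < Tm.count x p.1

/-- The rewrite relation of `R`: the closure of the rules under contexts and
substitutions. -/
inductive Rew {F : Type} {ar : F → ℕ} (R : Set (Tm F ar ℕ × Tm F ar ℕ)) :
    Tm F ar ℕ → Tm F ar ℕ → Prop
  | rule {l r} (σ : ℕ → Tm F ar ℕ) : (l, r) ∈ R → Rew R (l.subst σ) (r.subst σ)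
  | congr {f} {ts : Fin (ar f) → Tm F ar ℕ} (i) {t'} :
      Rew R (ts i) t' → Rew R (.fn f ts) (.fn f (Function.update ts i t'))

/-!
A strongly linear interpretation is affine in the variables, each occurrence contributing
with coefficient one: `[t]_β = [t]_0 + ∑ₓ |t|ₓ · β x`. For a rule `l → r` and a substitution `σ`
this gives `[rσ] = [r] + ∑ₓ |r|ₓ [xσ] ≤ [l] + WG + ∑ₓ |l|ₓ [xσ] = [lσ] + WG` by
non-duplication, and a context adds the same amount to both sides of a rewrite step.
-/

namespace Tm

variable {F : Type} {ar : F → ℕ} {V : Type}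

theorem evalSLI_subst (c : F → ℕ) (α : V → ℕ) (σ : V → Tm F ar V) (t : Tm F ar V) :
    evalSLI c α (t.subst σ) = evalSLI c (fun x => evalSLI c α (σ x)) t := by
  induction t with
  | var x => rfl
  | fn f ts ih => simp only [subst, evalSLI, ih]

theorem evalSLI_fn_update_add (c : F → ℕ) (α : V → ℕ) {f : F} (ts : Fin (ar f) → Tm F ar V)
    (i : Fin (ar f)) (t' : Tm F ar V) :
    evalSLI c α (fn f (Function.update ts i t')) + evalSLI c α (ts i) =
      evalSLI c α (fn f ts) + evalSLI c α t' := by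
  have hupdate : ∀ j, evalSLI c α (Function.update ts i t' j) =
      Function.update (fun j => evalSLI c α (ts j)) i (evalSLI c α t') j :=
    Function.apply_update (fun _ => evalSLI c α) ts i t'
  simp only [evalSLI, hupdate, Finset.sum_update_of_mem (Finset.mem_univ i),
    ← Finset.add_sum_erase _ _ (Finset.mem_univ i), Finset.sdiff_singleton_eq_erase]
  ring

variable [DecidableEq V]

def vars : Tm F ar V → Finset V
  | var x => {x}
  | fn _ ts => Finset.univ.biUnion fun i => (ts i).vars

theorem mem_vars_of_count_pos {x : V} {t : Tm F ar V} (h : 0 < count x t) : x ∈ t.vars := by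
  induction t with
  | var y =>
    by_cases hy : y = x
    · simp [vars, hy]
    · simp [count, hy] at h
  | fn f ts ih =>
    obtain ⟨i, -, hi⟩ := Finset.exists_lt_of_sum_lt (s := Finset.univ) (f := fun _ => 0)
      (by simpa [count] using h)
    simpa [vars] using ⟨i, ih i hi⟩

theorem evalSLI_eq_add_sum (c : F → ℕ) (β : V → ℕ) {S : Finset V} {t : Tm F ar V}
    (hS : ∀ x, 0 < count x t → x ∈ S) :
    evalSLI c β t = evalSLI c (fun _ => 0) t + ∑ x ∈ S, count x t * β x := by
  induction t with
  | var y => simp [evalSLI, count, hS y (by simp [count])]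
  | fn f ts ih =>
    have hSi : ∀ i, ∀ x, 0 < count x (ts i) → x ∈ S := fun i x hx =>
      hS x (Finset.sum_pos' (fun _ _ => Nat.zero_le _) ⟨i, Finset.mem_univ i, hx⟩)
    simp only [evalSLI, count, fun i => ih i (hSi i), Finset.sum_add_distrib, Finset.sum_mul,
      Finset.sum_comm (s := S)]
    ring

theorem evalSLI_add_le_of_count_le (c : F → ℕ) (β : V → ℕ) {l r : Tm F ar V}
    (hcount : ∀ x, count x r ≤ count x l) :
    evalSLI c β r + evalSLI c (fun _ => 0) l ≤ evalSLI c β l + evalSLI c (fun _ => 0) r := by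
  have hvars : ∀ x, 0 < count x r → x ∈ l.vars := fun x hx =>
    mem_vars_of_count_pos (hx.trans_le (hcount x))
  rw [evalSLI_eq_add_sum c β hvars, evalSLI_eq_add_sum c β (fun x => mem_vars_of_count_pos)]
  have hsum : ∑ x ∈ l.vars, count x r * β x ≤ ∑ x ∈ l.vars, count x l * β x :=
    Finset.sum_le_sum fun x _ => Nat.mul_le_mul_right _ (hcount x)
  omega

end Tm

theorem Rew.evalSLI_le_add {F : Type} {ar : F → ℕ} {R : Set (Tm F ar ℕ × Tm F ar ℕ)}
    (c : F → ℕ) (W : ℕ) (hnondup : ∀ p ∈ R, ∀ x, Tm.count x p.2 ≤ Tm.count x p.1)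
    (hW : ∀ p ∈ R, Tm.evalSLI c (fun _ => 0) p.2 ≤ Tm.evalSLI c (fun _ => 0) p.1 + W)
    (α : ℕ → ℕ) {s t : Tm F ar ℕ} (h : Rew R s t) :
    Tm.evalSLI c α t ≤ Tm.evalSLI c α s + W := by
  induction h with
  | @rule l r σ hlr =>
    rw [Tm.evalSLI_subst, Tm.evalSLI_subst]
    have hcount : ∀ x, Tm.count x r ≤ Tm.count x l := hnondup _ hlr
    have hshift := Tm.evalSLI_add_le_of_count_le c (fun x => Tm.evalSLI c α (σ x)) hcount
    have hgap : Tm.evalSLI c (fun _ => 0) r ≤ Tm.evalSLI c (fun _ => 0) l + W := hW _ hlr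
    omega
  | @congr f ts i t' _ ih =>
    have hctx := Tm.evalSLI_fn_update_add c α ts i t'
    omega

theorem weight_gap_general {F : Type} {ar : F → ℕ} (c : F → ℕ)
    (R : Finset (Tm F ar ℕ × Tm F ar ℕ))
    (hnondup : ∀ p ∈ R, ∀ x : ℕ, Tm.count x p.2 ≤ Tm.count x p.1)
    {s t : Tm F ar ℕ} (h : Rew (↑R : Set (Tm F ar ℕ × Tm F ar ℕ)) s t) :
    Tm.evalSLI c (fun _ => 0) t ≤
      Tm.evalSLI c (fun _ => 0) s +
        R.sup (fun p => Tm.evalSLI c (fun _ => 0) p.2 - Tm.evalSLI c (fun _ => 0) p.1) := by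
  refine h.evalSLI_le_add c _ hnondup (fun p hp => ?_) _
  have hgap := R.le_sup
    (f := fun p => Tm.evalSLI c (fun _ => 0) p.2 - Tm.evalSLI c (fun _ => 0) p.1) hp
  omega

/-- **weight gap principle.** For a finite non-duplicating TRS `R` over a
finite signature and a strongly linear interpretation `A` (given by constants `c`),
`s →_R t` implies `[s] + WG(A,R) ≥ [t]`, where
`WG(A,R) = max {[r] ∸ [l] : l → r ∈ R}`. -/
theorem weight_gap {F : Type} [Fintype F] {ar : F → ℕ} (c : F → ℕ)
    (R : Finset (Tm F ar ℕ × Tm F ar ℕ)) (hTRS : IsTRS (↑R : Set (Tm F ar ℕ × Tm F ar ℕ)))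
    (hnondup : ∀ p ∈ R, ∀ x : ℕ, Tm.count x p.2 ≤ Tm.count x p.1)
    {s t : Tm F ar ℕ} (h : Rew (↑R : Set (Tm F ar ℕ × Tm F ar ℕ)) s t) :
    Tm.evalSLI c (fun _ => 0) t ≤
      Tm.evalSLI c (fun _ => 0) s +
        R.sup (fun p => Tm.evalSLI c (fun _ => 0) p.2 - Tm.evalSLI c (fun _ => 0) p.1) :=
  weight_gap_general c R hnondup h
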